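/- For every n ≥ 1, let 𝒜_n = {0, 1, …, n} and let ℱ_n consist of all palindromes of length 2n+1 over 𝒜_n together with all words iii of three consecutive equal letters (i ∈ 𝒜_n). Then player A has a winning strategy in the no-pass Domino game Γ*(𝒜_n, ℱ_n, ℤ), in which each player on their turn must colour an uncoloured cell of ℤ (passing is not allowed), players alternate with A first, and A wins if a translate of some pattern of ℱ_n ever occurs in the coloured pattern. -/

import Mathlib

open Filter Topology

attribute [local instance] Classical.propDecidable

/-- The two players. -/
inductive Player | A | B
deriving DecidableEq

/-- A (possibly partial) colouring of `ℤ`: `none` means uncoloured.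
Colours are natural numbers; the alphabet of size `m` is `{0, …, m-1}`. -/
abbrev BoardZ := ℤ → Option ℕ

/-- A finite pattern on `ℤ`, encoded as a list of tiles (cell, colour). -/
abbrev PatternZ := List (ℤ × ℕ)

/-- A move: `none` is a pass, `some (i, a)` colours cell `i` with colour `a`. -/
abbrev MoveZ := Option (ℤ × ℕ)

/-- A (positional) strategy: a move for every position. -/
abbrev StrategyZ := BoardZ → MoveZ

/-- The pattern `p` occurs in the board `x` translated by `t`. -/
def occursAtZ (p : PatternZ) (x : BoardZ) (t : ℤ) : Prop :=
  ∀ q ∈ p, x (t + q.1) = some q.2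

/-- A position is final when a translate of some forbidden pattern occurs. -/
def isFinalZ (F : Set PatternZ) (x : BoardZ) : Prop :=
  ∃ p ∈ F, ∃ t : ℤ, occursAtZ p x t

/-- A colouring move: an uncoloured cell of `ℤ` receives a colour of the alphabet
`{0, …, m-1}` (a pass is not a colouring move). -/
def legalColour (m : ℕ) (x : BoardZ) : MoveZ → Prop
  | none => False
  | some (i, a) => x i = none ∧ a < m

/-- Legality of a move in the game with passes allowed. -/
def legalZ (m : ℕ) (x : BoardZ) (mv : MoveZ) : Prop :=
  mv = none ∨ legalColour m x mv

def applyZ (x : BoardZ) : MoveZ → BoardZ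
  | none => x
  | some (i, a) => Function.update x i (some a)

/-- One step of the game: the move proposed by the strategy is played if legal
(an illegal move is treated as a pass). -/
noncomputable def stepZ (m : ℕ) (st : StrategyZ) (x : BoardZ) : BoardZ :=
  if legalZ m x (st x) then applyZ x (st x) else x

/-- The play generated by strategies `stA`, `stB` with turn order `s`,
starting from the empty board. -/
noncomputable def playZ (m : ℕ) (s : ℕ → Player) (stA stB : StrategyZ) : ℕ → BoardZ
  | 0 => fun _ => none
  | t + 1 => stepZ m (match s t with | .A => stA | .B => stB) (playZ m s stA stB t)

/-- The alternating turn order: `A` plays first. -/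
def alt : ℕ → Player := fun t => if t % 2 = 0 then .A else .B

/-- A strategy for the no-pass game: on every board having an uncoloured cell,
it plays a legal colouring move (never a pass). -/
def NoPassStrategy (m : ℕ) (st : StrategyZ) : Prop :=
  ∀ x : BoardZ, (∃ i : ℤ, x i = none) → legalColour m x (st x)

/-- The forbidden patterns `ℱ_n`: all palindromes of length `2n+1` over the alphabet
`{0, …, n}`, together with all triples `iii` of three consecutive equal letters. -/
def Fpal (n : ℕ) : Set PatternZ :=
  {p | ∃ w : ℕ → ℕ, (∀ l ≤ 2 * n, w l ≤ n) ∧ (∀ l ≤ 2 * n, w l = w (2 * n - l)) ∧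
        p = (List.range (2 * n + 1)).map (fun l : ℕ => ((l : ℤ), w l))} ∪
  {p | ∃ i ≤ n, p = [((0 : ℤ), i), ((1 : ℤ), i), ((2 : ℤ), i)]}


/-!
`A` opens at `0` and from then on keeps the coloured cells a palindrome `[-k, k]` centred at `0`:
when `B` colours a cell `z` next to that block, `A` colours `-z` with the same colour, so after
`n` rounds the block is a palindrome of length `2n + 1`. When `B` colours a cell `z` away from
the block, `A` colours the neighbour of `z` on the far side from `0` with the same colour; this
domino has both ends free, `B` can block only one of them, and `A` completes a triple `iii` at
the other. Throughout, `A` takes an immediate win whenever one is available.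
-/

section Legalize

variable {m : ℕ} {p : StrategyZ} {x : BoardZ}

/-- A strategy must be legal on every board, also on boards never reached in play; `legalize`
replaces the illegal proposals of `p` there by some legal move. -/
noncomputable def legalize (m : ℕ) (p : StrategyZ) : StrategyZ := fun x =>
  if legalColour m x (p x) then p x
  else if h : ∃ i, x i = none then some (h.choose, 0) else none

lemma noPassStrategy_legalize (hm : 0 < m) : NoPassStrategy m (legalize m p) := by
  intro x hx
  unfold legalize
  split_ifs with hp
  · exact hp
  · exact ⟨hx.choose_spec, hm⟩

lemma legalize_of_legalColour (h : legalColour m x (p x)) : legalize m p x = p x :=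
  if_pos h

end Legalize

lemma stepZ_of_legalColour {m : ℕ} {st : StrategyZ} {x : BoardZ} (h : legalColour m x (st x)) :
    stepZ m st x = applyZ x (st x) :=
  if_pos (Or.inr h)

section Play

variable {m t : ℕ} {stA stB : StrategyZ}

lemma playZ_alt_succ_of_even (ht : Even t) :
    playZ m alt stA stB (t + 1) = stepZ m stA (playZ m alt stA stB t) := by
  simp [playZ, alt, Nat.even_iff.mp ht]

lemma playZ_alt_succ_of_odd (ht : Odd t) :
    playZ m alt stA stB (t + 1) = stepZ m stB (playZ m alt stA stB t) := by
  simp [playZ, alt, Nat.odd_iff.mp ht]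

end Play

def HasWinningMove (m : ℕ) (F : Set PatternZ) (x : BoardZ) : Prop :=
  ∃ mv : ℤ × ℕ, legalColour m x (some mv) ∧ isFinalZ F (applyZ x (some mv))

section Final

variable {n : ℕ} {x : BoardZ}

lemma isFinalZ_of_triple {t : ℤ} {w : ℕ} (hw : w ≤ n) (h0 : x t = some w)
    (h1 : x (t + 1) = some w) (h2 : x (t + 2) = some w) : isFinalZ (Fpal n) x := by
  refine ⟨_, Or.inr ⟨w, hw, rfl⟩, t, ?_⟩
  simp [occursAtZ, h0, h1, h2]

lemma hasWinningMove_of_domino {y : ℤ} {w : ℕ} (hw : w ≤ n) (h0 : x y = some w)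
    (h1 : x (y + 1) = some w) (hfree : x (y - 1) = none ∨ x (y + 2) = none) :
    HasWinningMove (n + 1) (Fpal n) x := by
  rcases hfree with hl | hr
  · refine ⟨(y - 1, w), ⟨hl, by omega⟩, isFinalZ_of_triple (t := y - 1) hw ?_ ?_ ?_⟩ <;>
      simp only [applyZ, Function.update_apply, sub_add_cancel, show y - 1 + 2 = y + 1 by ring] <;>
      simp [h0, h1]
  · refine ⟨(y + 2, w), ⟨hr, by omega⟩, isFinalZ_of_triple (t := y) hw ?_ ?_ ?_⟩ <;>
      simp only [applyZ, Function.update_apply] <;> simp [h0, h1]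

def symBoard (k : ℕ) (c : ℕ → ℕ) : BoardZ := fun z =>
  if z.natAbs ≤ k then some (c z.natAbs) else none

lemma isFinalZ_symBoard {c : ℕ → ℕ} (hc : ∀ j ≤ n, c j ≤ n) :
    isFinalZ (Fpal n) (symBoard n c) := by
  refine ⟨_, Or.inl ⟨fun l => c ((l : ℤ) - n).natAbs, fun l hl => hc _ (by omega), ?_, rfl⟩,
    -n, ?_⟩
  · intro l hl
    simp only
    congr 1
    omega
  · simp only [occursAtZ, List.mem_map, List.mem_range, forall_exists_index, and_imp]
    rintro _ l hl rfl
    simp only [symBoard]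
    rw [if_pos (by omega)]
    congr 3
    ring

lemma symBoard_succ {k : ℕ} {c : ℕ → ℕ} {i : ℤ} {w : ℕ} (hi : i.natAbs = k + 1) :
    Function.update (Function.update (symBoard k c) i (some w)) (-i) (some w) =
      symBoard (k + 1) (Function.update c (k + 1) w) := by
  funext z
  simp only [Function.update_apply, symBoard]
  split_ifs <;> first | rfl | omega

end Final

def answerUnmatched (x : BoardZ) (z : ℤ) : MoveZ :=
  some (if x (z - 1) = none ∧ x (z + 1) = none then (if 0 < z then z + 1 else z - 1) else -z,
    (x z).getD 0)

/-- In play, the only cell not matched by its mirror image is the one `B` has just coloured. -/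
noncomputable def palProposal (n : ℕ) (x : BoardZ) : MoveZ :=
  if h : HasWinningMove (n + 1) (Fpal n) x then some h.choose
  else if x 0 = none then some (0, 0)
  else if h : ∃ z, x z ≠ none ∧ x (-z) = none then answerUnmatched x h.choose
  else none

noncomputable def palStrategy (n : ℕ) : StrategyZ := legalize (n + 1) (palProposal n)

section Proposal

variable {n : ℕ} {x : BoardZ}

lemma stepZ_palStrategy_of_legalColour (h : legalColour (n + 1) x (palProposal n x)) :
    stepZ (n + 1) (palStrategy n) x = applyZ x (palProposal n x) := by
  have hs : palStrategy n x = palProposal n x := legalize_of_legalColour h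
  rw [stepZ_of_legalColour (hs ▸ h), hs]

lemma isFinalZ_stepZ_palStrategy (hW : HasWinningMove (n + 1) (Fpal n) x) :
    isFinalZ (Fpal n) (stepZ (n + 1) (palStrategy n) x) := by
  have hp : palProposal n x = some hW.choose := dif_pos hW
  rw [stepZ_palStrategy_of_legalColour (hp ▸ hW.choose_spec.1), hp]
  exact hW.choose_spec.2

lemma stepZ_palStrategy {i : ℤ} {a : ℕ} (hp : palProposal n x = some (i, a)) (hi : x i = none)
    (ha : a ≤ n) : stepZ (n + 1) (palStrategy n) x = Function.update x i (some a) := by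
  rw [stepZ_palStrategy_of_legalColour (hp ▸ ⟨hi, by omega⟩), hp]
  rfl

lemma palProposal_of_forall_eq_none (hW : ¬ HasWinningMove (n + 1) (Fpal n) x)
    (hx : ∀ z, x z = none) : palProposal n x = some (0, 0) := by
  rw [palProposal, dif_neg hW, if_pos (hx 0)]

lemma palProposal_of_unmatched (hW : ¬ HasWinningMove (n + 1) (Fpal n) x) (h0 : x 0 ≠ none)
    {i : ℤ} (hi : ∀ z, x z ≠ none ∧ x (-z) = none ↔ z = i) :
    palProposal n x = answerUnmatched x i := by
  have hex : ∃ z, x z ≠ none ∧ x (-z) = none := ⟨i, (hi i).2 rfl⟩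
  rw [palProposal, dif_neg hW, if_neg h0, dif_pos hex, (hi _).1 hex.choose_spec]

end Proposal

section SymBoard

variable {n k : ℕ} {c : ℕ → ℕ} {i : ℤ} {w : ℕ}

lemma update_symBoard_unmatched_iff (hi : k < i.natAbs) (z : ℤ) :
    Function.update (symBoard k c) i (some w) z ≠ none ∧
      Function.update (symBoard k c) i (some w) (-z) = none ↔ z = i := by
  simp only [Function.update_apply, symBoard]
  split_ifs <;> simp <;> omega

lemma answerUnmatched_update_symBoard_of_natAbs_eq (hi : i.natAbs = k + 1) :
    answerUnmatched (Function.update (symBoard k c) i (some w)) i = some (-i, w) := by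
  simp only [answerUnmatched, Function.update_apply, symBoard]
  split_ifs <;> simp_all <;> omega

lemma answerUnmatched_update_symBoard_of_lt (hi : k + 1 < i.natAbs) :
    answerUnmatched (Function.update (symBoard k c) i (some w)) i =
      some (if 0 < i then i + 1 else i - 1, w) := by
  simp only [answerUnmatched, Function.update_apply, symBoard]
  split_ifs <;> simp_all <;> omega

lemma palProposal_update_symBoard
    (hW : ¬ HasWinningMove (n + 1) (Fpal n) (Function.update (symBoard k c) i (some w)))
    (hi : k < i.natAbs) :
    palProposal n (Function.update (symBoard k c) i (some w)) =
      answerUnmatched (Function.update (symBoard k c) i (some w)) i := by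
  refine palProposal_of_unmatched hW ?_ (update_symBoard_unmatched_iff hi)
  simp only [Function.update_apply, symBoard]
  split_ifs <;> simp_all

end SymBoard

noncomputable abbrev game (n : ℕ) (stB : StrategyZ) : ℕ → BoardZ :=
  playZ (n + 1) alt (palStrategy n) stB

section Game

variable {n t k : ℕ} {stB : StrategyZ} {c : ℕ → ℕ} {i : ℤ} {w : ℕ}

lemma isFinalZ_game_succ (ht : Even t) (hW : HasWinningMove (n + 1) (Fpal n) (game n stB t)) :
    isFinalZ (Fpal n) (game n stB (t + 1)) := by
  rw [game, playZ_alt_succ_of_even ht]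
  exact isFinalZ_stepZ_palStrategy hW

lemma game_succ_of_even (ht : Even t) {a : ℕ} (hp : palProposal n (game n stB t) = some (i, a))
    (hi : game n stB t i = none) (ha : a ≤ n) :
    game n stB (t + 1) = Function.update (game n stB t) i (some a) := by
  rw [game, playZ_alt_succ_of_even ht]
  exact stepZ_palStrategy hp hi ha

lemma exists_game_succ_of_odd (hB : NoPassStrategy (n + 1) stB) (ht : Odd t) {e : ℤ}
    (he : game n stB t e = none) : ∃ i w, game n stB t i = none ∧ w ≤ n ∧
      game n stB (t + 1) = Function.update (game n stB t) i (some w) := by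
  have hleg := hB _ ⟨e, he⟩
  rcases hmv : stB (game n stB t) with _ | ⟨i, w⟩
  · rw [hmv] at hleg
    exact hleg.elim
  · refine ⟨i, w, (hmv ▸ hleg).1, by have := (hmv ▸ hleg).2; omega, ?_⟩
    rw [game, playZ_alt_succ_of_odd ht, stepZ_of_legalColour hleg, hmv]
    rfl

lemma exists_isFinalZ_of_domino (hB : NoPassStrategy (n + 1) stB) (ht : Odd t) {y : ℤ}
    (hw : w ≤ n) (h0 : game n stB t y = some w) (h1 : game n stB t (y + 1) = some w)
    (hl : game n stB t (y - 1) = none) (hr : game n stB t (y + 2) = none) :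
    ∃ s, isFinalZ (Fpal n) (game n stB s) := by
  obtain ⟨i, a, hi, -, hnext⟩ := exists_game_succ_of_odd hB ht hl
  have hi0 : i ≠ y := by rintro rfl; simp [h0] at hi
  have hi1 : i ≠ y + 1 := by rintro rfl; simp [h1] at hi
  refine ⟨t + 2, isFinalZ_game_succ ht.add_one
    (hasWinningMove_of_domino (y := y) hw ?_ ?_ ?_)⟩ <;> simp only [hnext, Function.update_apply]
  · simp [hi0.symm, h0]
  · simp [hi1.symm, h1]
  · by_cases hil : y - 1 = i
    · simp [hil.symm, hr]
      omega
    · simp [hil, hl]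

lemma game_succ_eq_symBoard_succ (ht : Even t)
    (hx : game n stB t = Function.update (symBoard k c) i (some w))
    (hW : ¬ HasWinningMove (n + 1) (Fpal n) (game n stB t)) (hi : i.natAbs = k + 1)
    (hw : w ≤ n) :
    game n stB (t + 1) = symBoard (k + 1) (Function.update c (k + 1) w) := by
  rw [hx] at hW
  have hp := palProposal_update_symBoard hW (by omega)
  rw [answerUnmatched_update_symBoard_of_natAbs_eq hi, ← hx] at hp
  rw [game_succ_of_even ht hp ?_ hw, hx, symBoard_succ hi]
  simp only [hx, Function.update_apply, symBoard, Int.natAbs_neg]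
  rw [if_neg (by omega), if_neg (by omega)]

lemma exists_isFinalZ_of_far_reply (hB : NoPassStrategy (n + 1) stB) (ht : Even t)
    (hx : game n stB t = Function.update (symBoard k c) i (some w))
    (hW : ¬ HasWinningMove (n + 1) (Fpal n) (game n stB t)) (hi : k + 1 < i.natAbs)
    (hw : w ≤ n) : ∃ s, isFinalZ (Fpal n) (game n stB s) := by
  rw [hx] at hW
  have hp := palProposal_update_symBoard hW (by omega)
  rw [answerUnmatched_update_symBoard_of_lt hi, ← hx] at hp
  have hnext := game_succ_of_even ht hp ?_ hw
  · rcases lt_or_gt_of_ne (show i ≠ 0 by omega) with hneg | hpos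
    · refine exists_isFinalZ_of_domino hB ht.add_one (y := i - 1) hw ?_ ?_ ?_ ?_ <;>
        simp only [hnext, hx, Function.update_apply, symBoard, if_neg (not_lt.mpr hneg.le)] <;>
        split_ifs <;> first | rfl | omega
    · refine exists_isFinalZ_of_domino hB ht.add_one (y := i) hw ?_ ?_ ?_ ?_ <;>
        simp only [hnext, hx, Function.update_apply, symBoard, if_pos hpos] <;>
        split_ifs <;> first | rfl | omega
  · simp only [hx, Function.update_apply, symBoard]
    split_ifs <;> simp_all <;> omega

theorem exists_isFinalZ_of_symBoard (hB : NoPassStrategy (n + 1) stB) (hk : k ≤ n)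
    (hc : ∀ j, c j ≤ n) (ht : Odd t) (hx : game n stB t = symBoard k c) :
    ∃ s, isFinalZ (Fpal n) (game n stB s) := by
  induction hd : n - k generalizing k t c with
  | zero =>
    obtain rfl : k = n := by omega
    exact ⟨t, hx ▸ isFinalZ_symBoard fun j _ => hc j⟩
  | succ d ih =>
    obtain ⟨i, w, hi, hw, hnext⟩ :=
      exists_game_succ_of_odd hB ht (e := k + 1) (by rw [hx, symBoard, if_neg (by omega)])
    rw [hx] at hi hnext
    have hik : k < i.natAbs := by
      by_contra h
      simp [symBoard, h] at hi
    by_cases hW : HasWinningMove (n + 1) (Fpal n) (game n stB (t + 1))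
    · exact ⟨t + 2, isFinalZ_game_succ ht.add_one hW⟩
    rcases (Nat.succ_le_of_lt hik).eq_or_lt with hik' | hik'
    · refine ih (by omega) ?_ ht.add_one.add_one
        (game_succ_eq_symBoard_succ ht.add_one hnext hW hik'.symm hw) (by omega)
      exact (Function.forall_update_iff c fun _ v => v ≤ n).2 ⟨hw, fun j _ => hc j⟩
    · exact exists_isFinalZ_of_far_reply hB ht.add_one hnext hW hik' hw

end Game

theorem aWins_noPass_palindromes_general (n : ℕ) :
    ∃ stA : StrategyZ, NoPassStrategy (n + 1) stA ∧
      ∀ stB : StrategyZ, NoPassStrategy (n + 1) stB →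
        ∃ t : ℕ, isFinalZ (Fpal n) (playZ (n + 1) alt stA stB t) := by
  refine ⟨palStrategy n, noPassStrategy_legalize n.succ_pos, fun stB hB => ?_⟩
  by_cases hW : HasWinningMove (n + 1) (Fpal n) (game n stB 0)
  · exact ⟨1, isFinalZ_game_succ Even.zero hW⟩
  have hfirst : game n stB 1 = symBoard 0 fun _ => 0 := by
    rw [game_succ_of_even Even.zero (palProposal_of_forall_eq_none hW fun _ => rfl) rfl n.zero_le]
    funext z
    by_cases hz : z = 0 <;> simp [symBoard, hz, game, playZ]
  exact exists_isFinalZ_of_symBoard hB n.zero_le (fun _ => n.zero_le) odd_one hfirst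

/-- For every `n ≥ 1`, player `A` has a winning strategy in the
no-pass Domino game `Γ*(𝒜_n, ℱ_n, ℤ)` with alphabet `𝒜_n = {0, …, n}` and forbidden
patterns the palindromes of length `2n+1` and the triples `iii`. -/
theorem aWins_noPass_palindromes (n : ℕ) (hn : 1 ≤ n) :
    ∃ stA : StrategyZ, NoPassStrategy (n + 1) stA ∧
      ∀ stB : StrategyZ, NoPassStrategy (n + 1) stB →
        ∃ t : ℕ, isFinalZ (Fpal n) (playZ (n + 1) alt stA stB t) :=
  aWins_noPass_palindromes_general n
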